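/- Let n ∈ ℕ, c, ω > 0 and α > q > 0. For ξ > 0 and s ≥ 0 define h_{n,α,ω}(ξ,s) := ((ξ+c−ω)²+s)^{(n−1)/2} / ((ξ+c+ω)²+s)^{(n+α+1)/2}, and set H(n) := ∫₀^∞ φ_q(ξ) · sup_{s≥0} h_{n,α,ω}(ξ,s) dξ. Then sup_{n∈ℕ} H(n) < ∞, and as n → ∞: H(n) = O(n^{q−α−1}) if q < α < 2q; H(n) = O(n^{-(q+1)} log n) if α = 2q; and H(n) = O(n^{-(α/2+1)}) if α > 2q. -/

import Mathlib

open Filter Topology MeasureTheory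

noncomputable section

/-- The weight `φ_q(ξ) = 1` for `ξ < 1` and `ξ^q` for `ξ ≥ 1`. -/
def phiq (q ξ : ℝ) : ℝ := if ξ < 1 then 1 else ξ ^ q

/-- `h_{n,α,ω}(ξ,s) = ((ξ+c-ω)²+s)^{(n-1)/2} / ((ξ+c+ω)²+s)^{(n+α+1)/2}`. -/
def hfun (n : ℕ) (α c ω ξ s : ℝ) : ℝ :=
  ((ξ + c - ω) ^ 2 + s) ^ (((n : ℝ) - 1) / 2) / ((ξ + c + ω) ^ 2 + s) ^ (((n : ℝ) + α + 1) / 2)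

/-- `H(n) = ∫₀^∞ φ_q(ξ) sup_{s ≥ 0} h_{n,α,ω}(ξ,s) dξ` as an extended real number. -/
def Hint (α c ω q : ℝ) (n : ℕ) : ENNReal :=
  ∫⁻ ξ in Set.Ioi (0 : ℝ),
    ENNReal.ofReal (phiq q ξ * ⨆ s : Set.Ici (0 : ℝ), hfun n α c ω ξ s)

/-!
Write `β = (α + 2) / 2` and `B = (ξ + c + ω)² + s`, so that `(ξ + c - ω)² + s = B - 4ω(ξ + c)`.
Then `(1 - t)^m ≤ e^{-mt}` and `x^β e^{-x} ≤ (β/e)^β` bound `h_{n,α,ω}(ξ, s)` by a constant times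
`(n (ξ + c))^{-β}`, uniformly in `s`, while trivially `h_{n,α,ω}(ξ, s) ≤ (ξ + c + ω)^{-(α+2)}`.
Using the first bound on `(0, n]` and the second on `(n, ∞)` gives
`H(n) ≲ n^{-β} (1 + ∫₁ⁿ ξ^{q-β} dξ) + n^{q-α-1}`, and the three regimes are `q - β > -1`, `= -1`
and `< -1`. The second bound alone gives the uniform estimate.
-/

open Set Real

lemma phiq_nonneg (q ξ : ℝ) : 0 ≤ phiq q ξ := by
  unfold phiq
  split_ifs with h
  · exact zero_le_one
  · exact rpow_nonneg (by linarith) q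

lemma phiq_of_one_le {q ξ : ℝ} (h : 1 ≤ ξ) : phiq q ξ = ξ ^ q := by
  rw [phiq, if_neg h.not_gt]

lemma phiq_of_le_one {q ξ : ℝ} (h : ξ ≤ 1) : phiq q ξ = 1 := by
  rcases h.lt_or_eq with hlt | rfl
  · rw [phiq, if_pos hlt]
  · rw [phiq_of_one_le le_rfl, one_rpow]

lemma phiq_mul_rpow_neg_le {q ξ x γ : ℝ} (hξ : 1 ≤ ξ) (hξx : ξ ≤ x) (hγ : 0 ≤ γ) :
    phiq q ξ * x ^ (-γ) ≤ ξ ^ (q - γ) := by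
  have hξ0 : 0 < ξ := by linarith
  rw [phiq_of_one_le hξ, sub_eq_add_neg, rpow_add hξ0]
  exact mul_le_mul_of_nonneg_left (rpow_le_rpow_of_nonpos hξ0 hξx (by linarith))
    (rpow_nonneg hξ0.le q)

lemma rpow_mul_exp_neg_le {b x : ℝ} (hb : 0 < b) (hx : 0 < x) :
    x ^ b * exp (-x) ≤ (b / exp 1) ^ b := by
  rw [rpow_def_of_pos hx, rpow_def_of_pos (by positivity), log_div hb.ne' (exp_pos 1).ne',
    log_exp, ← exp_add, exp_le_exp]
  have h := log_le_sub_one_of_pos (div_pos hx hb)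
  rw [log_div hx.ne' hb.ne', le_sub_iff_add_le] at h
  have h' := mul_le_mul_of_nonneg_right h hb.le
  rw [add_mul, div_mul_cancel₀ x hb.ne'] at h'
  nlinarith

lemma rpow_div_rpow_add_le_rpow_neg {A B m β : ℝ} (hA : 0 ≤ A) (hAB : A ≤ B) (hB : 0 < B)
    (hm : 0 ≤ m) : A ^ m / B ^ (m + β) ≤ B ^ (-β) := by
  rw [rpow_add hB, rpow_neg hB.le, ← div_div, div_eq_mul_inv _ (B ^ β)]
  exact mul_le_of_le_one_left (by positivity)
    (div_le_one_of_le₀ (rpow_le_rpow hA hAB hm) (rpow_nonneg hB.le m))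

lemma rpow_sub_div_rpow_add_le {B D m β : ℝ} (hD : 0 < D) (hDB : D ≤ B) (hm : 0 < m)
    (hβ : 0 < β) : (B - D) ^ m / B ^ (m + β) ≤ (β / (exp 1 * (m * D))) ^ β := by
  have hB : 0 < B := hD.trans_le hDB
  have hmD : 0 < m * D := mul_pos hm hD
  set X := m * D / B with hX
  have hsub : 0 ≤ 1 - D / B := by rw [sub_nonneg, div_le_one hB]; exact hDB
  have hdecay : (B - D) ^ m ≤ B ^ m * exp (-X) := by
    calc (B - D) ^ m = B ^ m * (1 - D / B) ^ m := by
          rw [← mul_rpow hB.le hsub, mul_one_sub, mul_div_cancel₀ D hB.ne']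
      _ ≤ B ^ m * exp (-(D / B)) ^ m := by gcongr; exact one_sub_le_exp_neg _
      _ = B ^ m * exp (-X) := by rw [← exp_mul, hX]; ring_nf
  have hscale : B ^ (-β) = X ^ β * (m * D) ^ (-β) := by
    rw [hX, div_rpow hmD.le hB.le, rpow_neg hB.le, rpow_neg hmD.le]
    field_simp
  calc (B - D) ^ m / B ^ (m + β) ≤ B ^ m * exp (-X) / (B ^ m * B ^ β) := by
        rw [rpow_add hB]; gcongr
    _ = X ^ β * exp (-X) * (m * D) ^ (-β) := by
        rw [mul_div_mul_left _ _ (rpow_pos_of_pos hB m).ne', div_eq_mul_inv, ← rpow_neg hB.le,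
          hscale]
        ring
    _ ≤ (β / exp 1) ^ β * (m * D) ^ (-β) := by
        gcongr; exact rpow_mul_exp_neg_le hβ (by positivity)
    _ = (β / (exp 1 * (m * D))) ^ β := by
        rw [rpow_neg hmD.le, ← div_eq_mul_inv, ← div_rpow (by positivity) hmD.le, div_div]

lemma hfun_le_far {n : ℕ} {α c ω ξ s : ℝ} (hn : 1 ≤ n) (hα : -2 ≤ α) (hξc : 0 ≤ ξ + c)
    (hω : 0 < ω) (hs : 0 ≤ s) : hfun n α c ω ξ s ≤ (ξ + c + ω) ^ (-(α + 2)) := by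
  have hn1 : (1 : ℝ) ≤ n := by exact_mod_cast hn
  have hpos : 0 < ξ + c + ω := by linarith
  rw [hfun, show ((n : ℝ) + α + 1) / 2 = ((n : ℝ) - 1) / 2 + (α + 2) / 2 by ring]
  calc _ ≤ ((ξ + c + ω) ^ 2 + s) ^ (-((α + 2) / 2)) :=
        rpow_div_rpow_add_le_rpow_neg (by positivity) (by nlinarith) (by positivity)
          (by linarith)
    _ ≤ ((ξ + c + ω) ^ 2) ^ (-((α + 2) / 2)) :=
        rpow_le_rpow_of_nonpos (by positivity) (by linarith) (by linarith)
    _ = (ξ + c + ω) ^ (-(α + 2)) := by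
        rw [← rpow_natCast, ← rpow_mul hpos.le]; ring_nf

lemma hfun_le_near {n : ℕ} {α c ω ξ s : ℝ} (hn : 2 ≤ n) (hα : -2 < α) (hξc : 0 < ξ + c)
    (hω : 0 < ω) (hs : 0 ≤ s) :
    hfun n α c ω ξ s ≤ ((α + 2) / 2 / (exp 1 * ω)) ^ ((α + 2) / 2) *
      (n : ℝ) ^ (-((α + 2) / 2)) * (ξ + c) ^ (-((α + 2) / 2)) := by
  have hn2 : (2 : ℝ) ≤ n := by exact_mod_cast hn
  set β := (α + 2) / 2
  have hβ : 0 < β := by show 0 < (α + 2) / 2; linarith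
  have hD : 0 < 4 * ω * (ξ + c) := by positivity
  rw [hfun, show ((n : ℝ) + α + 1) / 2 = ((n : ℝ) - 1) / 2 + β by ring,
    show (ξ + c - ω) ^ 2 + s = ((ξ + c + ω) ^ 2 + s) - 4 * ω * (ξ + c) by ring]
  calc _ ≤ (β / (exp 1 * (((n : ℝ) - 1) / 2 * (4 * ω * (ξ + c))))) ^ β :=
        rpow_sub_div_rpow_add_le hD (by nlinarith [sq_nonneg (ξ + c - ω)]) (by linarith) hβ
    _ ≤ (β / (exp 1 * (n * ω * (ξ + c)))) ^ β := by
        have hm : 0 < ((n : ℝ) - 1) / 2 := by linarith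
        gcongr (β / (exp 1 * ?_)) ^ β
        nlinarith [mul_pos hω hξc]
    _ = (β / (exp 1 * ω)) ^ β * (n : ℝ) ^ (-β) * (ξ + c) ^ (-β) := by
        rw [rpow_neg (by positivity), rpow_neg hξc.le, ← inv_rpow (by positivity),
          ← inv_rpow hξc.le, ← mul_rpow (by positivity) (by positivity),
          ← mul_rpow (by positivity) (by positivity)]
        congr 1
        field_simp

lemma setLIntegral_Ioi_rpow {a r : ℝ} (ha : 0 < a) (hr : r < -1) :
    ∫⁻ ξ in Ioi a, ENNReal.ofReal (ξ ^ r) = ENNReal.ofReal (-a ^ (r + 1) / (r + 1)) := by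
  rw [← ofReal_integral_eq_lintegral_ofReal (integrableOn_Ioi_rpow_of_lt hr ha)
      ((ae_restrict_iff' measurableSet_Ioi).2
        (ae_of_all _ fun ξ hξ => rpow_nonneg (ha.trans hξ).le r)),
    integral_Ioi_rpow_of_lt hr ha]

lemma setLIntegral_Ioc_rpow {a b r : ℝ} (ha : 0 < a) (hab : a ≤ b) :
    ∫⁻ ξ in Ioc a b, ENNReal.ofReal (ξ ^ r) = ENNReal.ofReal (∫ ξ in a..b, ξ ^ r) := by
  have hint : IntegrableOn (fun ξ : ℝ => ξ ^ r) (Ioc a b) :=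
    (intervalIntegrable_iff_integrableOn_Ioc_of_le hab).1
      (intervalIntegral.intervalIntegrable_rpow (Or.inr (notMem_uIcc_of_lt ha (ha.trans_le hab))))
  rw [intervalIntegral.integral_of_le hab, ofReal_integral_eq_lintegral_ofReal hint
    ((ae_restrict_iff' measurableSet_Ioc).2
      (ae_of_all _ fun ξ hξ => rpow_nonneg (ha.trans hξ.1).le r))]

lemma integral_one_rpow_le_of_neg_one_lt {r b : ℝ} (hr : -1 < r) :
    ∫ ξ in (1 : ℝ)..b, ξ ^ r ≤ b ^ (r + 1) / (r + 1) := by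
  rw [integral_rpow (Or.inl hr), one_rpow]
  gcongr
  · linarith
  · linarith

lemma integral_one_rpow_le_of_lt_neg_one {r b : ℝ} (hr : r < -1) (hb : 0 < b) :
    ∫ ξ in (1 : ℝ)..b, ξ ^ r ≤ 1 / -(r + 1) := by
  rw [integral_rpow (Or.inr ⟨hr.ne, notMem_uIcc_of_lt one_pos hb⟩), one_rpow, ← neg_div_neg_eq,
    neg_sub]
  gcongr
  · linarith
  · linarith [rpow_nonneg hb.le (r + 1)]

lemma setLIntegral_phiq_iSup_hfun_le {n : ℕ} {α c ω q : ℝ} {S : Set ℝ} {g : ℝ → ℝ}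
    (hS : MeasurableSet S) (hg : ∀ ξ ∈ S, ∀ s, 0 ≤ s → hfun n α c ω ξ s ≤ g ξ) :
    ∫⁻ ξ in S, ENNReal.ofReal (phiq q ξ * ⨆ s : Ici (0 : ℝ), hfun n α c ω ξ s) ≤
      ∫⁻ ξ in S, ENNReal.ofReal (phiq q ξ * g ξ) :=
  setLIntegral_mono' hS fun ξ hξ => ENNReal.ofReal_le_ofReal <|
    mul_le_mul_of_nonneg_left (ciSup_le fun s => hg ξ hξ s s.2) (phiq_nonneg q ξ)

lemma setLIntegral_Ioc_zero_one_phiq_iSup_hfun_le {n : ℕ} {α c ω q b : ℝ}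
    (hb : ∀ ξ ∈ Ioc (0 : ℝ) 1, ∀ s, 0 ≤ s → hfun n α c ω ξ s ≤ b) :
    ∫⁻ ξ in Ioc (0 : ℝ) 1, ENNReal.ofReal (phiq q ξ * ⨆ s : Ici (0 : ℝ), hfun n α c ω ξ s) ≤
      ENNReal.ofReal b :=
  calc _ ≤ ∫⁻ ξ in Ioc (0 : ℝ) 1, ENNReal.ofReal (phiq q ξ * b) :=
        setLIntegral_phiq_iSup_hfun_le measurableSet_Ioc hb
    _ = ∫⁻ _ in Ioc (0 : ℝ) 1, ENNReal.ofReal b :=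
        setLIntegral_congr_fun measurableSet_Ioc fun ξ hξ => by rw [phiq_of_le_one hξ.2, one_mul]
    _ = ENNReal.ofReal b := by rw [setLIntegral_const, volume_Ioc]; norm_num

lemma setLIntegral_Ioi_phiq_iSup_hfun_le {n : ℕ} {α c ω q a : ℝ} (hn : 1 ≤ n) (hα : -2 ≤ α)
    (hqα : q < α + 1) (hc : 0 ≤ c) (hω : 0 < ω) (ha : 1 ≤ a) :
    ∫⁻ ξ in Ioi a, ENNReal.ofReal (phiq q ξ * ⨆ s : Ici (0 : ℝ), hfun n α c ω ξ s) ≤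
      ENNReal.ofReal (a ^ (q - α - 1) / (α + 1 - q)) :=
  calc _ ≤ ∫⁻ ξ in Ioi a, ENNReal.ofReal (phiq q ξ * (ξ + c + ω) ^ (-(α + 2))) :=
        setLIntegral_phiq_iSup_hfun_le measurableSet_Ioi fun ξ hξ _ hs =>
          hfun_le_far hn hα (by linarith [mem_Ioi.1 hξ]) hω hs
    _ ≤ ∫⁻ ξ in Ioi a, ENNReal.ofReal (ξ ^ (q - (α + 2))) :=
        setLIntegral_mono' measurableSet_Ioi fun ξ hξ => ENNReal.ofReal_le_ofReal <|
          phiq_mul_rpow_neg_le (ha.trans (mem_Ioi.1 hξ).le) (by linarith) (by linarith)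
    _ = ENNReal.ofReal (a ^ (q - α - 1) / (α + 1 - q)) := by
        rw [setLIntegral_Ioi_rpow (by linarith) (by linarith),
          show q - (α + 2) + 1 = -(α + 1 - q) by ring, div_neg, neg_div, neg_neg,
          show -(α + 1 - q) = q - α - 1 by ring]

lemma Hint_le_uniform {n : ℕ} {α c ω q : ℝ} (hn : 1 ≤ n) (hα : -2 ≤ α) (hqα : q < α + 1)
    (hc : 0 ≤ c) (hω : 0 < ω) :
    Hint α c ω q n ≤ ENNReal.ofReal ((c + ω) ^ (-(α + 2)) + 1 / (α + 1 - q)) := by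
  have head : ∫⁻ ξ in Ioc (0 : ℝ) 1,
      ENNReal.ofReal (phiq q ξ * ⨆ s : Ici (0 : ℝ), hfun n α c ω ξ s) ≤
        ENNReal.ofReal ((c + ω) ^ (-(α + 2))) :=
    setLIntegral_Ioc_zero_one_phiq_iSup_hfun_le fun ξ hξ _ hs =>
      (hfun_le_far hn hα (by linarith [hξ.1]) hω hs).trans <|
        rpow_le_rpow_of_nonpos (by positivity) (by linarith [hξ.1]) (by linarith)
  have tail := setLIntegral_Ioi_phiq_iSup_hfun_le (q := q) hn hα hqα hc hω le_rfl
  rw [one_rpow] at tail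
  rw [Hint, ← Ioc_union_Ioi_eq_Ioi zero_le_one, lintegral_union measurableSet_Ioi
    (Ioc_disjoint_Ioi le_rfl), ENNReal.ofReal_add (by positivity)
    (one_div_nonneg.2 (by linarith))]
  exact add_le_add head tail

lemma Hint_le_of_two_le {n : ℕ} {α c ω q : ℝ} (hn : 2 ≤ n) (hα : -2 < α) (hqα : q < α + 1)
    (hc : 0 < c) (hω : 0 < ω) :
    Hint α c ω q n ≤ ENNReal.ofReal (((α + 2) / 2 / (exp 1 * ω)) ^ ((α + 2) / 2) *
      (n : ℝ) ^ (-((α + 2) / 2)) * (c ^ (-((α + 2) / 2)) +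
        ∫ ξ in (1 : ℝ)..n, ξ ^ (q - (α + 2) / 2)) + (n : ℝ) ^ (q - α - 1) / (α + 1 - q)) := by
  set β := (α + 2) / 2 with hβ
  set K := (β / (exp 1 * ω)) ^ β
  have hn1 : (1 : ℝ) ≤ n := by exact_mod_cast one_le_two.trans hn
  have hKn : 0 ≤ K * (n : ℝ) ^ (-β) :=
    mul_nonneg (rpow_nonneg (div_nonneg (by linarith) (by positivity)) β) (by positivity)
  have head : ∫⁻ ξ in Ioc (0 : ℝ) 1,
      ENNReal.ofReal (phiq q ξ * ⨆ s : Ici (0 : ℝ), hfun n α c ω ξ s) ≤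
        ENNReal.ofReal (K * (n : ℝ) ^ (-β) * c ^ (-β)) :=
    setLIntegral_Ioc_zero_one_phiq_iSup_hfun_le fun ξ hξ _ hs =>
      (hfun_le_near hn hα (by linarith [hξ.1]) hω hs).trans <| mul_le_mul_of_nonneg_left
        (rpow_le_rpow_of_nonpos hc (by linarith [hξ.1]) (by linarith)) hKn
  have middle : ∫⁻ ξ in Ioc (1 : ℝ) n,
      ENNReal.ofReal (phiq q ξ * ⨆ s : Ici (0 : ℝ), hfun n α c ω ξ s) ≤
        ENNReal.ofReal (K * (n : ℝ) ^ (-β) * ∫ ξ in (1 : ℝ)..n, ξ ^ (q - β)) :=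
    calc _ ≤ ∫⁻ ξ in Ioc (1 : ℝ) n, ENNReal.ofReal (phiq q ξ * (K * n ^ (-β) * (ξ + c) ^ (-β))) :=
          setLIntegral_phiq_iSup_hfun_le measurableSet_Ioc fun ξ hξ _ hs =>
            hfun_le_near hn hα (by linarith [hξ.1]) hω hs
      _ ≤ ∫⁻ ξ in Ioc (1 : ℝ) n,
            ENNReal.ofReal (K * (n : ℝ) ^ (-β)) * ENNReal.ofReal (ξ ^ (q - β)) :=
          setLIntegral_mono' measurableSet_Ioc fun ξ hξ => by
            rw [← ENNReal.ofReal_mul hKn, mul_left_comm]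
            exact ENNReal.ofReal_le_ofReal <| mul_le_mul_of_nonneg_left
              (phiq_mul_rpow_neg_le hξ.1.le (by linarith) (by linarith)) hKn
      _ = ENNReal.ofReal (K * (n : ℝ) ^ (-β) * ∫ ξ in (1 : ℝ)..n, ξ ^ (q - β)) := by
          rw [lintegral_const_mul' _ _ ENNReal.ofReal_ne_top,
            setLIntegral_Ioc_rpow one_pos hn1, ENNReal.ofReal_mul hKn]
  have tail := setLIntegral_Ioi_phiq_iSup_hfun_le (q := q) (one_le_two.trans hn) hα.le hqα
    hc.le hω hn1
  have hJ : 0 ≤ ∫ ξ in (1 : ℝ)..n, ξ ^ (q - β) :=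
    intervalIntegral.integral_nonneg hn1 fun ξ hξ => rpow_nonneg (by linarith [hξ.1]) _
  rw [Hint, ← Ioc_union_Ioi_eq_Ioi (zero_le_one.trans hn1), lintegral_union measurableSet_Ioi
    (Ioc_disjoint_Ioi le_rfl), ← Ioc_union_Ioc_eq_Ioc zero_le_one hn1,
    lintegral_union measurableSet_Ioc (Ioc_disjoint_Ioc_of_le le_rfl), mul_add,
    ENNReal.ofReal_add (by positivity) (div_nonneg (by positivity) (by linarith)),
    ENNReal.ofReal_add (by positivity) (by positivity)]
  exact add_le_add (add_le_add head middle) tail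

lemma Hint_le_rpow_of_lt_two_mul {α c ω q : ℝ} (hqα : q < α + 1) (hc : 0 < c) (hω : 0 < ω)
    (hlt : α < 2 * q) :
    ∃ M : ℝ, 0 < M ∧ ∃ N : ℕ, ∀ n : ℕ, N ≤ n →
      Hint α c ω q n ≤ ENNReal.ofReal (M * (n : ℝ) ^ (q - α - 1)) := by
  have hα : -2 < α := by linarith
  have hr : 0 < q - (α + 2) / 2 + 1 := by linarith
  set β := (α + 2) / 2 with hβ
  set K := (β / (exp 1 * ω)) ^ β
  have hK : 0 < K := rpow_pos_of_pos (div_pos (by linarith) (by positivity)) β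
  refine ⟨K * c ^ (-β) + K / (q - β + 1) + 1 / (α + 1 - q), by
    have : 0 < α + 1 - q := by linarith
    positivity, 2, fun n hn => (Hint_le_of_two_le hn hα hqα hc hω).trans
      (ENNReal.ofReal_le_ofReal ?_)⟩
  have hn1 : (1 : ℝ) ≤ n := by exact_mod_cast one_le_two.trans hn
  have hrate : (n : ℝ) ^ (-β) ≤ (n : ℝ) ^ (q - α - 1) :=
    rpow_le_rpow_of_exponent_le hn1 (by linarith)
  have hmul : (n : ℝ) ^ (-β) * (n : ℝ) ^ (q - β + 1) = (n : ℝ) ^ (q - α - 1) := by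
    rw [← rpow_add (by linarith), hβ]; ring_nf
  calc K * (n : ℝ) ^ (-β) * (c ^ (-β) + ∫ ξ in (1 : ℝ)..n, ξ ^ (q - β)) +
        (n : ℝ) ^ (q - α - 1) / (α + 1 - q)
      ≤ K * (n : ℝ) ^ (-β) * (c ^ (-β) + (n : ℝ) ^ (q - β + 1) / (q - β + 1)) +
        (n : ℝ) ^ (q - α - 1) / (α + 1 - q) := by
        gcongr
        exact integral_one_rpow_le_of_neg_one_lt (by linarith)
    _ = K * c ^ (-β) * (n : ℝ) ^ (-β) + K / (q - β + 1) * ((n : ℝ) ^ (-β) * (n : ℝ) ^ (q - β + 1))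
        + 1 / (α + 1 - q) * (n : ℝ) ^ (q - α - 1) := by ring
    _ ≤ (K * c ^ (-β) + K / (q - β + 1) + 1 / (α + 1 - q)) * (n : ℝ) ^ (q - α - 1) := by
        rw [hmul, add_mul, add_mul]; gcongr

lemma Hint_le_log_mul_rpow_of_eq_two_mul {α c ω q : ℝ} (hα : -2 < α) (hc : 0 < c) (hω : 0 < ω)
    (heq : α = 2 * q) :
    ∃ M : ℝ, 0 < M ∧ ∃ N : ℕ, ∀ n : ℕ, N ≤ n →
      Hint α c ω q n ≤ ENNReal.ofReal (M * log (n : ℝ) * (n : ℝ) ^ (-(q + 1))) := by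
  subst heq
  have hq : 0 < q + 1 := by linarith
  set K := ((q + 1) / (exp 1 * ω)) ^ (q + 1)
  have hK : 0 < K := rpow_pos_of_pos (div_pos hq (by positivity)) _
  refine ⟨K * c ^ (-(q + 1)) + K + 1 / (q + 1), by positivity, 3, fun n hn => ?_⟩
  have hn0 : (0 : ℝ) < n := by exact_mod_cast (by omega : 0 < n)
  have hlog : 1 ≤ log n := by
    rw [le_log_iff_exp_le hn0]
    have h3 : (3 : ℝ) ≤ n := by exact_mod_cast hn
    linarith [exp_one_lt_d9]
  have hJ : ∫ ξ in (1 : ℝ)..n, ξ ^ (-1 : ℝ) = log n := by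
    simp only [rpow_neg_one]; rw [integral_inv_of_pos one_pos hn0, div_one]
  have h := Hint_le_of_two_le (n := n) (q := q) (by omega) hα (by linarith) hc hω
  rw [show (2 * q + 2) / 2 = q + 1 by ring, show q - (q + 1) = -1 by ring,
    show q - 2 * q - 1 = -(q + 1) by ring, show 2 * q + 1 - q = q + 1 by ring, hJ] at h
  refine h.trans (ENNReal.ofReal_le_ofReal ?_)
  calc K * (n : ℝ) ^ (-(q + 1)) * (c ^ (-(q + 1)) + log n) + (n : ℝ) ^ (-(q + 1)) / (q + 1)
      ≤ K * (n : ℝ) ^ (-(q + 1)) * (c ^ (-(q + 1)) * log n + log n) +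
        (n : ℝ) ^ (-(q + 1)) * log n / (q + 1) := by
        gcongr
        · exact le_mul_of_one_le_right (by positivity) hlog
        · exact le_mul_of_one_le_right (by positivity) hlog
    _ = (K * c ^ (-(q + 1)) + K + 1 / (q + 1)) * log n * (n : ℝ) ^ (-(q + 1)) := by ring

lemma Hint_le_rpow_of_two_mul_lt {α c ω q : ℝ} (hα : -2 < α) (hc : 0 < c) (hω : 0 < ω)
    (hgt : 2 * q < α) :
    ∃ M : ℝ, 0 < M ∧ ∃ N : ℕ, ∀ n : ℕ, N ≤ n →
      Hint α c ω q n ≤ ENNReal.ofReal (M * (n : ℝ) ^ (-(α / 2 + 1))) := by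
  have hr : 0 < (α + 2) / 2 - q - 1 := by linarith
  set β := (α + 2) / 2 with hβ
  set K := (β / (exp 1 * ω)) ^ β
  have hK : 0 < K := rpow_pos_of_pos (div_pos (by linarith) (by positivity)) β
  refine ⟨K * c ^ (-β) + K / (β - q - 1) + 1 / (α + 1 - q), by
    have : 0 < α + 1 - q := by linarith
    positivity, 2, fun n hn => (Hint_le_of_two_le hn hα (by linarith) hc hω).trans
      (ENNReal.ofReal_le_ofReal ?_)⟩
  have hn1 : (1 : ℝ) ≤ n := by exact_mod_cast one_le_two.trans hn
  have hrate : (n : ℝ) ^ (q - α - 1) ≤ (n : ℝ) ^ (-β) :=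
    rpow_le_rpow_of_exponent_le hn1 (by linarith)
  have hJ : ∫ ξ in (1 : ℝ)..n, ξ ^ (q - β) ≤ 1 / (β - q - 1) := by
    rw [show β - q - 1 = -(q - β + 1) by ring]
    exact integral_one_rpow_le_of_lt_neg_one (by linarith) (by linarith)
  rw [show -(α / 2 + 1) = -β by ring]
  calc K * (n : ℝ) ^ (-β) * (c ^ (-β) + ∫ ξ in (1 : ℝ)..n, ξ ^ (q - β)) +
        (n : ℝ) ^ (q - α - 1) / (α + 1 - q)
      ≤ K * (n : ℝ) ^ (-β) * (c ^ (-β) + 1 / (β - q - 1)) + (n : ℝ) ^ (-β) / (α + 1 - q) := by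
        gcongr
        linarith
    _ = (K * c ^ (-β) + K / (β - q - 1) + 1 / (α + 1 - q)) * (n : ℝ) ^ (-β) := by ring

/-- Lemma 3.7 (the `h` part): for `c, ω > 0` and `α > q > 0`, the quantities `H(n)` are
uniformly bounded in `n`, and as `n → ∞`:
`H(n) = O(n^{q-α-1})` if `q < α < 2q`, `H(n) = O(n^{-(q+1)} log n)` if `α = 2q`, and
`H(n) = O(n^{-(α/2+1)})` if `α > 2q`. -/
theorem Hint_bounds
    (α c ω q : ℝ) (hc : 0 < c) (hω : 0 < ω) (hq : 0 < q) (hα : q < α) :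
    (∃ C : ℝ, ∀ n : ℕ, 1 ≤ n → Hint α c ω q n ≤ ENNReal.ofReal C) ∧
    (α < 2 * q →
      ∃ M : ℝ, 0 < M ∧ ∃ N : ℕ, ∀ n : ℕ, N ≤ n →
        Hint α c ω q n ≤ ENNReal.ofReal (M * (n : ℝ) ^ (q - α - 1))) ∧
    (α = 2 * q →
      ∃ M : ℝ, 0 < M ∧ ∃ N : ℕ, ∀ n : ℕ, N ≤ n →
        Hint α c ω q n ≤ ENNReal.ofReal (M * Real.log (n : ℝ) * (n : ℝ) ^ (-(q + 1)))) ∧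
    (2 * q < α →
      ∃ M : ℝ, 0 < M ∧ ∃ N : ℕ, ∀ n : ℕ, N ≤ n →
        Hint α c ω q n ≤ ENNReal.ofReal (M * (n : ℝ) ^ (-(α / 2 + 1)))) := by
  have hα2 : -2 < α := by linarith
  have hqα : q < α + 1 := by linarith
  exact ⟨⟨_, fun n hn => Hint_le_uniform hn hα2.le hqα hc.le hω⟩,
    Hint_le_rpow_of_lt_two_mul hqα hc hω,
    Hint_le_log_mul_rpow_of_eq_two_mul hα2 hc hω,
    Hint_le_rpow_of_two_mul_lt hα2 hc hω⟩

end
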